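/- arXiv:2407.17463 — 3 statements merged into one kernel-verified Lean document; each statement's English description precedes it below -/
import Mathlib

section
/- Let f, g : T^3 → ℝ be smooth functions on the 3-torus and σ ∈ ℕ with σ ≥ 1. Then for every p ∈ [1,∞], the difference |‖f·g(σ·)‖_{L^p(T^3)} − ‖f‖_{L^p(T^3)}·‖g‖_{L^p(T^3)}| is bounded by C·σ^{−1/p}·‖f‖_{C^1(T^3)}·‖g‖_{L^p(T^3)} for a constant C independent of f, g, σ. -/
open MeasureTheory Filter
open scoped ENNReal BigOperators

noncomputable section

/-- The fundamental cube `[0,1]³` of the torus `𝕋³ = (ℝ/ℤ)³`. -/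
def cube3 : Set (Fin 3 → ℝ) := Set.univ.pi fun _ => Set.Icc (0:ℝ) 1

/-- Lebesgue measure restricted to the fundamental cube, i.e. the measure of `𝕋³`. -/
noncomputable def μ3 : Measure (Fin 3 → ℝ) := volume.restrict cube3

/-- `f` is `ℤ³`-periodic, i.e. a function on the torus `𝕋³`. -/
def Periodic3 (f : (Fin 3 → ℝ) → ℝ) : Prop :=
  ∀ (x : Fin 3 → ℝ) (k : Fin 3 → ℤ), f (x + fun i => (k i : ℝ)) = f x

/-- `C¹` norm of `f` : `‖f‖_∞ + ‖∇f‖_∞`. -/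
noncomputable def C1norm (f : (Fin 3 → ℝ) → ℝ) : ℝ :=
  sSup (Set.range fun x => |f x|) + sSup (Set.range fun x => ‖fderiv ℝ f x‖)

namespace Decor

abbrev X := Fin 3 → ℝ

def I01 : Set X := Set.univ.pi fun _ => Set.Ico (0:ℝ) 1

lemma I01_subset_cube3 : I01 ⊆ cube3 := fun x hx i hi =>
  ⟨(hx i hi).1, le_of_lt (hx i hi).2⟩

lemma measurableSet_I01 : MeasurableSet I01 :=
  MeasurableSet.univ_pi fun _ => measurableSet_Ico

lemma measurableSet_cube3 : MeasurableSet cube3 :=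
  MeasurableSet.univ_pi fun _ => measurableSet_Icc

lemma isCompact_cube3 : IsCompact cube3 :=
  isCompact_univ_pi fun _ => isCompact_Icc

lemma coord_null (i : Fin 3) : volume {x : X | x i = 1} = 0 := by
  classical
  have : {x : X | x i = 1} = Set.univ.pi (fun j => if j = i then {(1:ℝ)} else Set.univ) := by
    ext x
    simp only [Set.mem_setOf_eq, Set.mem_pi, Set.mem_univ, forall_true_left]
    constructor
    · intro h j
      by_cases hj : j = i <;> simp [hj, h]
    · intro h
      have := h i
      simpa using this
  rw [this, volume_pi_pi]
  apply Finset.prod_eq_zero (Finset.mem_univ i)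
  simp

lemma cube3_ae_I01 : cube3 =ᵐ[volume] I01 := by
  rw [MeasureTheory.ae_eq_set]
  constructor
  · refine measure_mono_null (fun x hx => ?_) (measure_iUnion_null fun i => coord_null i)
    · 
      simp only [Set.mem_diff, I01, Set.mem_pi, Set.mem_univ, forall_true_left,
        Set.mem_Ico, not_forall] at hx
      obtain ⟨h1, i, hi⟩ := hx
      have h1i := h1 i (Set.mem_univ i)
      simp only [Set.mem_Icc] at h1i
      have : x i = 1 := by
        rcases not_and_or.1 hi with h | h
        · exact absurd h1i.1 h
        · linarith [h1i.2, not_lt.1 h]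
      exact Set.mem_iUnion.2 ⟨i, this⟩
  · have : I01 \ cube3 = ∅ := Set.diff_eq_empty.2 I01_subset_cube3
    simp [this]

lemma setIntegral_cube3_eq_I01 (u : X → ℝ) :
    ∫ x in cube3, u x = ∫ x in I01, u x :=
  setIntegral_congr_set cube3_ae_I01

lemma volume_I01 : volume I01 = 1 := by
  rw [I01, volume_pi_pi]
  simp

variable {σ : ℕ}

def cvec (m : Fin 3 → Fin σ) : X := fun i => (m i : ℝ)

def φ (σ : ℕ) (m : Fin 3 → Fin σ) : X → X := fun y => (σ:ℝ)⁻¹ • (cvec m + y)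

def Q (σ : ℕ) (m : Fin 3 → Fin σ) : Set X :=
  Set.univ.pi fun i => Set.Ico ((m i : ℝ)/σ) (((m i : ℝ)+1)/σ)

lemma mem_Q_iff (hσ0 : (0:ℝ) < σ) (m : Fin 3 → Fin σ) (x : X) :
    x ∈ Q σ m ↔ ∀ i, (m i : ℝ) ≤ σ * x i ∧ (σ:ℝ) * x i < m i + 1 := by
  simp only [Q, Set.mem_pi, Set.mem_univ, forall_true_left, Set.mem_Ico]
  refine forall_congr' fun i => ?_
  rw [div_le_iff₀ hσ0, lt_div_iff₀ hσ0, mul_comm (x i) (σ:ℝ)]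

lemma Q_eq_image (hσ : 1 ≤ σ) (m : Fin 3 → Fin σ) : Q σ m = φ σ m '' I01 := by
  have hσ0 : (0:ℝ) < σ := by exact_mod_cast hσ
  have key : ∀ t : ℝ, (σ:ℝ) * ((σ:ℝ)⁻¹ * t) = t := fun t => by field_simp
  ext x
  rw [mem_Q_iff hσ0]
  constructor
  · intro h
    refine ⟨(σ:ℝ) • x - cvec m, fun i _ => ?_, ?_⟩
    · have hi := h i
      simp only [Set.mem_Ico, Pi.sub_apply, Pi.smul_apply, smul_eq_mul, cvec]
      constructor <;> linarith [hi.1, hi.2]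
    · have : cvec m + ((σ:ℝ) • x - cvec m) = (σ:ℝ) • x := by abel
      simp only [φ, this, smul_smul, inv_mul_cancel₀ hσ0.ne', one_smul]
  · rintro ⟨y, hy, rfl⟩ i
    have hyi := hy i (Set.mem_univ i)
    simp only [Set.mem_Ico] at hyi
    simp only [φ, Pi.smul_apply, Pi.add_apply, smul_eq_mul, cvec, key]
    constructor <;> linarith [hyi.1, hyi.2]

lemma iUnion_Q (hσ : 1 ≤ σ) : (⋃ m : Fin 3 → Fin σ, Q σ m) = I01 := by
  have hσ0 : (0:ℝ) < σ := by exact_mod_cast hσ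
  ext x
  simp only [Set.mem_iUnion, I01, Set.mem_pi, Set.mem_univ, forall_true_left, Set.mem_Ico]
  constructor
  · rintro ⟨m, hm⟩ i
    rw [mem_Q_iff hσ0] at hm
    obtain ⟨h1, h2⟩ := hm i
    have hm0 : (0:ℝ) ≤ (m i : ℝ) := by positivity
    have hms : ((m i : ℕ) : ℝ) + 1 ≤ σ := by exact_mod_cast (m i).2
    constructor
    · nlinarith
    · nlinarith
  · intro hx
    have hfl : ∀ i, ⌊(σ:ℝ) * x i⌋₊ < σ := by
      intro i
      have h1 : (0:ℝ) ≤ σ * x i := by nlinarith [(hx i).1]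
      have h2 : (σ:ℝ) * x i < σ := by nlinarith [(hx i).2]
      exact Nat.floor_lt h1 |>.2 (by exact_mod_cast h2)
    refine ⟨fun i => ⟨⌊(σ:ℝ) * x i⌋₊, hfl i⟩, ?_⟩
    rw [mem_Q_iff hσ0]
    intro i
    have h0 : (0:ℝ) ≤ σ * x i := by nlinarith [(hx i).1]
    exact ⟨Nat.floor_le h0, Nat.lt_floor_add_one _⟩

lemma Q_disjoint (hσ : 1 ≤ σ) : Pairwise (Function.onFun Disjoint (Q σ)) := by
  have hσ0 : (0:ℝ) < σ := by exact_mod_cast hσ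
  intro m m' hmm
  rw [Function.onFun, Set.disjoint_left]
  intro x hx hx'
  apply hmm
  rw [mem_Q_iff hσ0] at hx hx'
  funext i
  have h := hx i; have h' := hx' i
  have hle : (m i : ℕ) ≤ (m' i : ℕ) := by
    by_contra hc
    push_neg at hc
    have : ((m' i : ℕ) : ℝ) + 1 ≤ ((m i : ℕ) : ℝ) := by exact_mod_cast hc
    linarith [h.1, h'.2]
  have hle' : (m' i : ℕ) ≤ (m i : ℕ) := by
    by_contra hc
    push_neg at hc
    have : ((m i : ℕ) : ℝ) + 1 ≤ ((m' i : ℕ) : ℝ) := by exact_mod_cast hc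
    linarith [h'.1, h.2]
  exact Fin.ext (le_antisymm hle hle')


lemma measurableSet_Q (m : Fin 3 → Fin σ) : MeasurableSet (Q σ m) :=
  MeasurableSet.univ_pi fun _ => measurableSet_Ico
lemma integral_image_φ (hσ : 1 ≤ σ) (m : Fin 3 → Fin σ) (H : X → ℝ) :
    ∫ x in φ σ m '' I01, H x = ((σ:ℝ)⁻¹)^3 * ∫ y in I01, H (φ σ m y) := by
  have hσ0 : (0:ℝ) < σ := by exact_mod_cast hσ
  have hd : ∀ y ∈ I01, HasFDerivWithinAt (φ σ m)
      ((σ:ℝ)⁻¹ • ContinuousLinearMap.id ℝ X) I01 y := by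
    intro y _
    exact (((hasFDerivAt_id y).const_add (cvec m)).const_smul ((σ:ℝ)⁻¹)).hasFDerivWithinAt
  have hinj : Set.InjOn (φ σ m) I01 := by
    intro a _ b _ hab
    have := congrArg (fun z => (σ:ℝ) • z) hab
    simp only [φ, smul_smul, mul_inv_cancel₀ hσ0.ne', one_smul] at this
    exact add_left_cancel this
  have hdet : ((σ:ℝ)⁻¹ • ContinuousLinearMap.id ℝ X).det = ((σ:ℝ)⁻¹)^3 := by
    rw [ContinuousLinearMap.det]
    simp only [ContinuousLinearMap.coe_smul, ContinuousLinearMap.coe_id]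
    rw [LinearMap.det_smul, LinearMap.det_id, mul_one]
    norm_num [Module.finrank_fin_fun]
  rw [integral_image_eq_integral_abs_det_fderiv_smul volume measurableSet_I01 hd hinj H]
  simp only [hdet, smul_eq_mul, abs_of_pos (by positivity : (0:ℝ) < ((σ:ℝ)⁻¹)^3)]
  exact integral_const_mul _ _


lemma integrableOn_I01 (H : X → ℝ) (hH : Continuous H) : IntegrableOn H I01 := by
  exact (hH.continuousOn.integrableOn_compact isCompact_cube3).mono_set I01_subset_cube3

lemma decomp (hσ : 1 ≤ σ) (H : X → ℝ) (hH : Continuous H) :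
    ∫ x in I01, H x = ∑ m : Fin 3 → Fin σ, ((σ:ℝ)⁻¹)^3 * ∫ y in I01, H (φ σ m y) := by
  conv_lhs => rw [← iUnion_Q hσ]
  have hInt : IntegrableOn H (⋃ m : Fin 3 → Fin σ, Q σ m) := by
    rw [iUnion_Q hσ]; exact integrableOn_I01 H hH
  rw [integral_iUnion (fun m => measurableSet_Q m) (Q_disjoint hσ) hInt]
  rw [tsum_fintype]
  refine Finset.sum_congr rfl fun m _ => ?_
  rw [Q_eq_image hσ m, integral_image_φ hσ m H]
lemma continuous_φ (m : Fin 3 → Fin σ) : Continuous (φ σ m) :=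
  by unfold φ; fun_prop

lemma key (hσ : 1 ≤ σ) (h k : X → ℝ) (hh : Continuous h) (hk : Continuous k)
    (hkper : Periodic3 k) (hknn : ∀ x, 0 ≤ k x) (L : ℝ) (hL0 : 0 ≤ L)
    (hL : ∀ x y, |h x - h y| ≤ L * ‖x - y‖) :
    |(∫ x in I01, h x * k ((σ:ℝ) • x)) - (∫ x in I01, h x) * ∫ x in I01, k x|
      ≤ 2 * L / σ * ∫ x in I01, k x := by
  have hσ0 : (0:ℝ) < σ := by exact_mod_cast hσ
  have hkI : (0:ℝ) ≤ ∫ x in I01, k x :=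
    setIntegral_nonneg (MeasurableSet.univ_pi fun _ => measurableSet_Ico)
      (fun x _ => hknn x)
  have hksmul : Continuous fun x : X => k ((σ:ℝ) • x) := hk.comp (continuous_const_smul _)
  have hH : Continuous fun x : X => h x * k ((σ:ℝ) • x) := hh.mul hksmul
  -- periodic shift
  have hshift : ∀ (m : Fin 3 → Fin σ) (y : X), k ((σ:ℝ) • φ σ m y) = k y := by
    intro m y
    have h1 : (σ:ℝ) • φ σ m y = cvec m + y := by
      simp only [φ, smul_smul, mul_inv_cancel₀ hσ0.ne', one_smul]
    rw [h1, add_comm]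
    have := hkper y (fun i => ((m i : ℕ) : ℤ))
    convert this using 2
    ext i
    simp [cvec]
  -- decompositions
  have hdec1 : ∫ x in I01, h x * k ((σ:ℝ) • x)
      = ∑ m : Fin 3 → Fin σ, ((σ:ℝ)⁻¹)^3 * ∫ y in I01, h (φ σ m y) * k y := by
    rw [decomp hσ _ hH]
    refine Finset.sum_congr rfl fun m _ => ?_
    congr 1
    refine setIntegral_congr_fun (MeasurableSet.univ_pi fun _ => measurableSet_Ico)
      (fun y _ => ?_)
    rw [hshift m y]
  have hdec2 : ∫ x in I01, h x
      = ∑ m : Fin 3 → Fin σ, ((σ:ℝ)⁻¹)^3 * ∫ y in I01, h (φ σ m y) := by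
    exact decomp hσ h hh
  -- per-cube bound
  have hcube : ∀ m : Fin 3 → Fin σ,
      |(∫ y in I01, h (φ σ m y) * k y) - (∫ y in I01, h (φ σ m y)) * ∫ y in I01, k y|
        ≤ 2 * L / σ * ∫ y in I01, k y := by
    intro m
    set a := h (φ σ m 0) with ha
    have hφc : Continuous fun y => h (φ σ m y) := hh.comp (continuous_φ m)
    have hbd : ∀ y ∈ I01, |h (φ σ m y) - a| ≤ L / σ := by
      intro y hy
      have hnorm : ‖y‖ ≤ 1 := by
        rw [pi_norm_le_iff_of_nonneg zero_le_one]
        intro i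
        have := hy i (Set.mem_univ i)
        simp only [Set.mem_Ico] at this
        rw [Real.norm_eq_abs, abs_le]
        constructor <;> linarith [this.1, this.2]
      have hdiff : φ σ m y - φ σ m 0 = (σ:ℝ)⁻¹ • y := by
        simp only [φ, add_zero, ← smul_sub, add_sub_cancel_left]
      calc |h (φ σ m y) - a| ≤ L * ‖φ σ m y - φ σ m 0‖ := hL _ _
        _ = L * ((σ:ℝ)⁻¹ * ‖y‖) := by rw [hdiff, norm_smul, Real.norm_eq_abs,
            abs_of_pos (by positivity : (0:ℝ) < (σ:ℝ)⁻¹)]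
        _ ≤ L * ((σ:ℝ)⁻¹ * 1) := by
            apply mul_le_mul_of_nonneg_left _ hL0
            exact mul_le_mul_of_nonneg_left hnorm (by positivity)
        _ = L / σ := by field_simp
    -- rewrite the difference
    have hmeas : MeasurableSet I01 := MeasurableSet.univ_pi fun _ => measurableSet_Ico
    have hint1 : IntegrableOn (fun y => h (φ σ m y) * k y) I01 :=
      integrableOn_I01 _ (hφc.mul hk)
    have hint2 : IntegrableOn (fun y => h (φ σ m y)) I01 := integrableOn_I01 _ hφc
    have hintk : IntegrableOn k I01 := integrableOn_I01 _ hk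
    have hint3 : IntegrableOn (fun y => (h (φ σ m y) - a) * k y) I01 :=
      integrableOn_I01 _ ((hφc.sub continuous_const).mul hk)
    have e1 : (∫ y in I01, h (φ σ m y) * k y)
        = (∫ y in I01, (h (φ σ m y) - a) * k y) + a * ∫ y in I01, k y := by
      rw [← integral_const_mul, ← integral_add hint3 (hintk.const_mul a)]
      congr 1; ext y; ring
    have e2 : (∫ y in I01, h (φ σ m y)) = (∫ y in I01, (h (φ σ m y) - a)) + a := by
      have : (∫ y in I01, (h (φ σ m y) - a))
          = (∫ y in I01, h (φ σ m y)) - a * (volume I01).toReal := by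
        rw [integral_sub hint2 (integrableOn_const (by rw [volume_I01]; exact ENNReal.one_ne_top))]
        simp [integral_const]
        exact mul_comm _ _
      rw [this, volume_I01]
      simp
    have b1 : |∫ y in I01, (h (φ σ m y) - a) * k y| ≤ L / σ * ∫ y in I01, k y := by
      calc |∫ y in I01, (h (φ σ m y) - a) * k y|
            ≤ ∫ y in I01, |h (φ σ m y) - a| * |k y| := by
            simpa [Real.norm_eq_abs] using
              norm_integral_le_integral_norm (μ := volume.restrict I01)
                (fun y => (h (φ σ m y) - a) * k y)
        _ ≤ ∫ y in I01, L / σ * k y := by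
            apply setIntegral_mono_on
              (integrableOn_I01 _ ((hφc.sub continuous_const).abs.mul hk.abs))
              (hintk.const_mul _) hmeas
            intro y hy
            show |h (φ σ m y) - a| * |k y| ≤ L / σ * k y
            rw [abs_of_nonneg (hknn y)]
            exact mul_le_mul_of_nonneg_right (hbd y hy) (hknn y)
        _ = L / σ * ∫ y in I01, k y := integral_const_mul _ _
    have b2 : |∫ y in I01, (h (φ σ m y) - a)| ≤ L / σ := by
      have := norm_setIntegral_le_of_norm_le_const (μ := volume) (s := I01)
        (by rw [volume_I01]; exact ENNReal.one_lt_top)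
        (f := fun y => h (φ σ m y) - a) (C := L / σ) (fun y hy => by
          rw [Real.norm_eq_abs]; exact hbd y hy)
      rw [Real.norm_eq_abs] at this
      calc |∫ y in I01, (h (φ σ m y) - a)| ≤ L / σ * (volume I01).toReal := this
        _ = L / σ := by rw [volume_I01]; simp
    calc |(∫ y in I01, h (φ σ m y) * k y) - (∫ y in I01, h (φ σ m y)) * ∫ y in I01, k y|
        = |(∫ y in I01, (h (φ σ m y) - a) * k y) - (∫ y in I01, (h (φ σ m y) - a)) * ∫ y in I01, k y| := by
          rw [e1, e2]; congr 1; ring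
      _ ≤ |∫ y in I01, (h (φ σ m y) - a) * k y| + |∫ y in I01, (h (φ σ m y) - a)| * ∫ y in I01, k y := by
          refine (abs_sub _ _).trans ?_
          rw [abs_mul, abs_of_nonneg hkI]
      _ ≤ L / σ * (∫ y in I01, k y) + L / σ * ∫ y in I01, k y := by
          exact add_le_add b1 (mul_le_mul_of_nonneg_right b2 hkI)
      _ = 2 * L / σ * ∫ y in I01, k y := by ring
  -- sum up
  rw [hdec1, hdec2, Finset.sum_mul, ← Finset.sum_sub_distrib]
  calc |∑ m : Fin 3 → Fin σ, (((σ:ℝ)⁻¹)^3 * (∫ y in I01, h (φ σ m y) * k y)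
          - ((σ:ℝ)⁻¹)^3 * (∫ y in I01, h (φ σ m y)) * ∫ y in I01, k y)|
      ≤ ∑ m : Fin 3 → Fin σ, ((σ:ℝ)⁻¹)^3 * (2 * L / σ * ∫ y in I01, k y) := by
        refine (Finset.abs_sum_le_sum_abs _ _).trans (Finset.sum_le_sum fun m _ => ?_)
        rw [mul_assoc ((σ:ℝ)⁻¹^3), ← mul_sub, abs_mul, abs_of_pos (by positivity : (0:ℝ) < ((σ:ℝ)⁻¹)^3)]
        exact mul_le_mul_of_nonneg_left (hcube m) (by positivity)
    _ = 2 * L / σ * ∫ y in I01, k y := by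
        rw [Finset.sum_const, Finset.card_univ]
        have : (Fintype.card (Fin 3 → Fin σ) : ℝ) = (σ:ℝ)^3 := by
          simp [Fintype.card_fun]
        rw [nsmul_eq_mul, this]
        field_simp
private lemma aux_ordered {a b p : ℝ} (ha : 0 ≤ a) (hb : 0 ≤ b) (hp : 1 ≤ p) (hba : b ≤ a) :
    |a - b| ≤ |a ^ p - b ^ p| ^ p⁻¹ := by
  have hp0 : 0 < p := lt_of_lt_of_le one_pos hp
  have hsup : (a - b) ^ p + b ^ p ≤ a ^ p := by
    have h := NNReal.add_rpow_le_rpow_add (a - b).toNNReal b.toNNReal hp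
    have hab' : (a - b).toNNReal + b.toNNReal = a.toNNReal := by
      ext
      simp [Real.coe_toNNReal _ (sub_nonneg.2 hba), Real.coe_toNNReal _ hb,
        Real.coe_toNNReal _ ha]
    rw [hab'] at h
    have h2 := NNReal.coe_le_coe.2 h
    push_cast [NNReal.coe_rpow, Real.coe_toNNReal _ (sub_nonneg.2 hba),
      Real.coe_toNNReal _ hb, Real.coe_toNNReal _ ha] at h2
    exact h2
  have h2 : (a - b) ^ p ≤ a ^ p - b ^ p := by linarith
  have h1 : a - b ≤ (a ^ p - b ^ p) ^ p⁻¹ := by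
    calc a - b = ((a - b) ^ p) ^ p⁻¹ := by
          rw [← Real.rpow_mul (sub_nonneg.2 hba), mul_inv_cancel₀ hp0.ne', Real.rpow_one]
      _ ≤ (a ^ p - b ^ p) ^ p⁻¹ :=
          Real.rpow_le_rpow (Real.rpow_nonneg (sub_nonneg.2 hba) p) h2 (by positivity)
  rw [abs_of_nonneg (sub_nonneg.2 hba),
    abs_of_nonneg (sub_nonneg.2 (Real.rpow_le_rpow hb hba hp0.le))]
  exact h1

lemma abs_sub_le_abs_rpow_sub_rpow {a b p : ℝ} (ha : 0 ≤ a) (hb : 0 ≤ b) (hp : 1 ≤ p) :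
    |a - b| ≤ |a ^ p - b ^ p| ^ p⁻¹ := by
  rcases le_total b a with hba | hab
  · exact aux_ordered ha hb hp hba
  · rw [abs_sub_comm, abs_sub_comm (a ^ p)]
    exact aux_ordered hb ha hp hab

-- |a^p - b^p| ≤ p * A^(p-1) * |a - b| for 0 ≤ a,b ≤ A, p ≥ 1
lemma abs_rpow_sub_rpow_le {a b A p : ℝ} (ha : 0 ≤ a) (hb : 0 ≤ b) (haA : a ≤ A) (hbA : b ≤ A)
    (hp : 1 ≤ p) : |a ^ p - b ^ p| ≤ p * A ^ (p - 1) * |a - b| := by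
  have hA : 0 ≤ A := le_trans ha haA
  have hd : ∀ t ∈ Set.Icc (0:ℝ) A, HasDerivWithinAt (fun s : ℝ => s ^ p)
      (p * t ^ (p - 1)) (Set.Icc 0 A) t := fun t _ =>
    (Real.hasDerivAt_rpow_const (Or.inr hp)).hasDerivWithinAt
  have hbound : ∀ t ∈ Set.Icc (0:ℝ) A, ‖p * t ^ (p - 1)‖ ≤ p * A ^ (p - 1) := by
    intro t ht
    rw [Real.norm_eq_abs, abs_mul, abs_of_pos (lt_of_lt_of_le one_pos hp),
      abs_of_nonneg (Real.rpow_nonneg ht.1 _)]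
    exact mul_le_mul_of_nonneg_left
      (Real.rpow_le_rpow ht.1 ht.2 (by linarith)) (by linarith)
  have := (convex_Icc (0:ℝ) A).norm_image_sub_le_of_norm_hasDerivWithin_le hd hbound
    (Set.mem_Icc.2 ⟨hb, hbA⟩) (Set.mem_Icc.2 ⟨ha, haA⟩)
  simpa [Real.norm_eq_abs] using this

lemma exists_rep (v : X → ℝ) (hper : Periodic3 v) (x : X) : ∃ y ∈ I01, v y = v x := by
  refine ⟨fun i => Int.fract (x i), fun i _ => ⟨Int.fract_nonneg _, Int.fract_lt_one _⟩, ?_⟩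
  have hx : x = (fun i => Int.fract (x i)) + fun i => ((⌊x i⌋ : ℤ) : ℝ) := by
    funext i
    exact ((Int.fract_add_floor (x i)).symm)
  conv_rhs => rw [hx]
  exact (hper (fun i => Int.fract (x i)) (fun i => ⌊x i⌋)).symm

lemma range_subset_image (v : X → ℝ) (hper : Periodic3 v) :
    Set.range v ⊆ v '' cube3 := by
  rintro - ⟨x, rfl⟩
  obtain ⟨y, hy, hvy⟩ := exists_rep v hper x
  exact ⟨y, I01_subset_cube3 hy, hvy⟩

lemma bddAbove_range (v : X → ℝ) (hv : Continuous v) (hper : Periodic3 v) :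
    BddAbove (Set.range v) :=
  BddAbove.mono (range_subset_image v hper)
    (isCompact_cube3.bddAbove_image hv.continuousOn)

lemma le_sSup_range (v : X → ℝ) (hv : Continuous v) (hper : Periodic3 v) (x : X) :
    v x ≤ sSup (Set.range v) :=
  le_csSup (bddAbove_range v hv hper) ⟨x, rfl⟩

/-- every value of a continuous periodic function is at most the L∞ norm on the cube -/
lemma le_eLpNorm_top (g : X → ℝ) (hg : Continuous g) (hper : Periodic3 g) (x : X) :
    |g x| ≤ (eLpNorm g ∞ μ3).toReal := by
  obtain ⟨x1, hx1, hgx1⟩ := exists_rep g hper x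
  rw [← hgx1]
  by_contra hcon
  push_neg at hcon
  set t := (eLpNorm g ∞ μ3).toReal with ht
  set c := (t + |g x1|) / 2 with hc
  have htc : t < c := by
    have : 0 ≤ t := ENNReal.toReal_nonneg
    simp only [hc]; linarith
  have hcx : c < |g x1| := by simp only [hc]; linarith
  -- open set where |g| > c
  have hU : IsOpen {z : X | c < |g z|} := isOpen_lt continuous_const hg.abs
  obtain ⟨δ, hδ0, hball⟩ := Metric.isOpen_iff.1 hU x1 hcx
  -- small box inside ball ∩ cube3
  set B : Set X := Set.univ.pi fun i => Set.Ico (x1 i) (min (x1 i + δ/2) 1) with hB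
  have hBmeas : MeasurableSet B := MeasurableSet.univ_pi fun _ => measurableSet_Ico
  have hBcube : B ⊆ cube3 := by
    intro z hz i _
    have h1 := hz i (Set.mem_univ i)
    have h2 := hx1 i (Set.mem_univ i)
    simp only [Set.mem_Ico] at h1 h2
    exact ⟨le_trans h2.1 h1.1, le_of_lt (lt_of_lt_of_le h1.2 (min_le_right _ _))⟩
  have hBball : B ⊆ Metric.ball x1 δ := by
    intro z hz
    rw [Metric.mem_ball, dist_pi_lt_iff hδ0]
    intro i
    have h1 := hz i (Set.mem_univ i)
    simp only [Set.mem_Ico] at h1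
    rw [Real.dist_eq, abs_lt]
    have := lt_of_lt_of_le h1.2 (min_le_left _ _)
    constructor <;> linarith [h1.1]
  have hBpos : 0 < volume B := by
    rw [hB, volume_pi_pi]
    rw [CanonicallyOrderedAdd.prod_pos]
    intro i _
    rw [Real.volume_Ico]
    apply ENNReal.ofReal_pos.2
    have h2 := hx1 i (Set.mem_univ i)
    simp only [Set.mem_Ico] at h2
    have : x1 i < min (x1 i + δ/2) 1 := lt_min (by linarith) h2.2
    linarith
  have hμ3B : 0 < μ3 B := by
    rw [μ3, Measure.restrict_apply hBmeas, Set.inter_eq_self_of_subset_left hBcube]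
    exact hBpos
  -- a.e. bound by essSup
  have hae : ∀ᵐ z ∂μ3, (‖g z‖₊ : ℝ≥0∞) ≤ eLpNorm g ∞ μ3 := by
    rw [eLpNorm_exponent_top]
    exact ae_le_eLpNormEssSup
  -- eLpNorm finite
  have hfin : eLpNorm g ∞ μ3 ≠ ∞ := by
    have hbd : ∀ᵐ z ∂μ3, ‖g z‖ ≤ sSup (Set.range fun x => |g x|) := by
      refine ae_of_all _ fun z => ?_
      rw [Real.norm_eq_abs]
      exact le_sSup_range _ hg.abs (fun y kk => congrArg abs (hper y kk)) z
    exact ne_top_of_le_ne_top ENNReal.ofReal_ne_top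
      ((eLpNorm_exponent_top (f := g) (μ := μ3)) ▸ eLpNormEssSup_le_of_ae_bound hbd)
  -- find a point in B with the a.e. bound
  obtain ⟨z, hzB, hz⟩ : ∃ z, z ∈ B ∧ (‖g z‖₊ : ℝ≥0∞) ≤ eLpNorm g ∞ μ3 := by
    by_contra hno
    push_neg at hno
    have : μ3 B = 0 := by
      have hsub : B ⊆ {z | ¬((‖g z‖₊ : ℝ≥0∞) ≤ eLpNorm g ∞ μ3)} := fun z hz => not_le.2 (hno z hz)
      exact measure_mono_null hsub (ae_iff.1 hae)
    exact absurd this hμ3B.ne'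
  have hzc : c < |g z| := hball (hBball hzB)
  have : |g z| ≤ t := by
    have := ENNReal.toReal_mono hfin hz
    simpa [coe_nnnorm, Real.norm_eq_abs, ht] using this
  linarith
instance : IsFiniteMeasure μ3 :=
  ⟨by rw [μ3, Measure.restrict_apply_univ]; exact isCompact_cube3.measure_lt_top⟩

lemma fderiv_periodic (f : X → ℝ) (hf : ContDiff ℝ (⊤ : ℕ∞) f) (hper : Periodic3 f) :
    Periodic3 fun x => ‖fderiv ℝ f x‖ := by
  intro x kv
  have heq : (fun y : X => f (y + fun i => ((kv i : ℤ) : ℝ))) = f :=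
    funext fun y => hper y kv
  have hD : HasFDerivAt f (fderiv ℝ f (x + fun i => ((kv i : ℤ) : ℝ)))
      (x + fun i => ((kv i : ℤ) : ℝ)) :=
    ((hf.differentiable (by simp)) _).hasFDerivAt
  have ht : HasFDerivAt (fun y : X => y + fun i => ((kv i : ℤ) : ℝ))
      (ContinuousLinearMap.id ℝ X) x := (hasFDerivAt_id x).add_const _
  have hcomp : HasFDerivAt (fun y : X => f (y + fun i => ((kv i : ℤ) : ℝ)))
      ((fderiv ℝ f (x + fun i => ((kv i : ℤ) : ℝ))).comp (ContinuousLinearMap.id ℝ X)) x :=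
    hD.comp x ht
  rw [heq, ContinuousLinearMap.comp_id] at hcomp
  show ‖fderiv ℝ f _‖ = ‖fderiv ℝ f x‖
  rw [hcomp.fderiv]

lemma lipschitz_of_fderiv_bound (f : X → ℝ) (hf : ContDiff ℝ (⊤ : ℕ∞) f) (B : ℝ)
    (hB : ∀ x, ‖fderiv ℝ f x‖ ≤ B) (x y : X) : |f x - f y| ≤ B * ‖x - y‖ := by
  have := Convex.norm_image_sub_le_of_norm_fderiv_le
    (fun z _ => (hf.differentiable (by simp)) z) (fun z _ => hB z)
    convex_univ (Set.mem_univ y) (Set.mem_univ x)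
  simpa [Real.norm_eq_abs] using this

lemma memLp_of_bound (u : X → ℝ) (hu : Continuous u) (Cu : ℝ) (hCu : ∀ x, |u x| ≤ Cu)
    (p : ℝ≥0∞) : MemLp u p μ3 :=
  MemLp.of_bound hu.aestronglyMeasurable.restrict Cu
    (ae_of_all _ fun x => by rw [Real.norm_eq_abs]; exact hCu x)

lemma eLpNorm_toReal_eq (u : X → ℝ) (hu : Continuous u) (Cu : ℝ) (hCu : ∀ x, |u x| ≤ Cu)
    (p : ℝ≥0∞) (hp0 : p ≠ 0) (hpt : p ≠ ∞) :
    (eLpNorm u p μ3).toReal = (∫ x in cube3, |u x| ^ p.toReal) ^ (p.toReal)⁻¹ := by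
  rw [MemLp.eLpNorm_eq_integral_rpow_norm hp0 hpt (memLp_of_bound u hu Cu hCu p)]
  rw [ENNReal.toReal_ofReal (by positivity)]
  simp only [Real.norm_eq_abs, one_div]
  rfl

end Decor


open Decor in
/-- Decorrelation lemma: for smooth periodic `f, g` on `𝕋³` and `σ ≥ 1`, for every
`p ∈ [1,∞]` one has
`|‖f · g(σ·)‖_{Lᵖ} − ‖f‖_{Lᵖ}‖g‖_{Lᵖ}| ≤ C σ^{-1/p} ‖f‖_{C¹} ‖g‖_{Lᵖ}`. -/
theorem decorrelation :
    ∃ C : ℝ, 0 < C ∧ ∀ (f g : (Fin 3 → ℝ) → ℝ) (σ : ℕ), 1 ≤ σ →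
      ContDiff ℝ (⊤ : ℕ∞) f → ContDiff ℝ (⊤ : ℕ∞) g → Periodic3 f → Periodic3 g →
      ∀ p : ℝ≥0∞, 1 ≤ p →
        |(eLpNorm (fun x => f x * g (fun i => (σ : ℝ) * x i)) p μ3).toReal -
            (eLpNorm f p μ3).toReal * (eLpNorm g p μ3).toReal| ≤
          C * (σ : ℝ) ^ (-(1 / p).toReal) * C1norm f * (eLpNorm g p μ3).toReal := by
  refine ⟨4, by norm_num, ?_⟩
  intro f g σ hσ hf hg hpf hpg p hp
  have hσ0 : (0:ℝ) < σ := by exact_mod_cast hσ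
  -- C¹ data for f
  set A := sSup (Set.range fun x => |f x|) with hAdef
  set B := sSup (Set.range fun x => ‖fderiv ℝ f x‖) with hBdef
  have hfaper : Periodic3 fun x => |f x| := fun y kk => congrArg abs (hpf y kk)
  have hA : ∀ x, |f x| ≤ A := le_sSup_range _ hf.continuous.abs hfaper
  have hA0 : 0 ≤ A := le_trans (abs_nonneg _) (hA 0)
  have hBper : Periodic3 fun x => ‖fderiv ℝ f x‖ := fderiv_periodic f hf hpf
  have hB : ∀ x, ‖fderiv ℝ f x‖ ≤ B :=
    le_sSup_range _ (hf.continuous_fderiv (by simp)).norm hBper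
  have hB0 : 0 ≤ B := le_trans (norm_nonneg _) (hB 0)
  have hM : C1norm f = A + B := rfl
  have hM0 : 0 ≤ C1norm f := by rw [hM]; linarith
  have hlip : ∀ x y, |f x - f y| ≤ B * ‖x - y‖ := lipschitz_of_fderiv_bound f hf B hB
  -- sup of |g|
  set Sg := sSup (Set.range fun x => |g x|) with hSgdef
  have hgaper : Periodic3 fun x => |g x| := fun y kk => congrArg abs (hpg y kk)
  have hSg : ∀ x, |g x| ≤ Sg := le_sSup_range _ hg.continuous.abs hgaper
  have hSg0 : 0 ≤ Sg := le_trans (abs_nonneg _) (hSg 0)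
  -- the rescaled function
  have hsmul : ∀ x : Fin 3 → ℝ, (fun i => (σ : ℝ) * x i) = (σ:ℝ) • x := fun x => rfl
  have hprodbd : ∀ x, |f x * g (fun i => (σ : ℝ) * x i)| ≤ A * Sg := by
    intro x
    rw [abs_mul]
    exact mul_le_mul (hA x) (hSg _) (abs_nonneg _) hA0
  have hprodcont : Continuous fun x => f x * g (fun i => (σ : ℝ) * x i) :=
    hf.continuous.mul (hg.continuous.comp (by
      have : (fun x : Fin 3 → ℝ => fun i => (σ : ℝ) * x i) = fun x => (σ:ℝ) • x := by
        funext x; exact hsmul x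
      rw [this]
      exact continuous_const_smul _))
  rcases eq_or_ne p ∞ with hptop | hpfin
  · -- p = ∞
    subst hptop
    have hexp : (-(1 / (∞:ℝ≥0∞)).toReal) = (0:ℝ) := by simp
    rw [hexp, Real.rpow_zero]
    set t1 := (eLpNorm (fun x => f x * g (fun i => (σ : ℝ) * x i)) ∞ μ3).toReal
    set tf := (eLpNorm f ∞ μ3).toReal
    set tg := (eLpNorm g ∞ μ3).toReal
    have htf : tf ≤ A := by
      apply ENNReal.toReal_le_of_le_ofReal hA0
      rw [eLpNorm_exponent_top]
      exact eLpNormEssSup_le_of_ae_bound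
        (ae_of_all _ fun x => by rw [Real.norm_eq_abs]; exact hA x)
    have htg : tg ≤ Sg := by
      apply ENNReal.toReal_le_of_le_ofReal hSg0
      rw [eLpNorm_exponent_top]
      exact eLpNormEssSup_le_of_ae_bound
        (ae_of_all _ fun x => by rw [Real.norm_eq_abs]; exact hSg x)
    have ht1 : t1 ≤ A * Sg := by
      apply ENNReal.toReal_le_of_le_ofReal (mul_nonneg hA0 hSg0)
      rw [eLpNorm_exponent_top]
      exact eLpNormEssSup_le_of_ae_bound
        (ae_of_all _ fun x => by rw [Real.norm_eq_abs]; exact hprodbd x)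
    have hSgtg : Sg ≤ tg := by
      apply csSup_le (Set.range_nonempty _)
      rintro - ⟨x, rfl⟩
      exact le_eLpNorm_top g hg.continuous hpg x
    have ht10 : 0 ≤ t1 := ENNReal.toReal_nonneg
    have htf0 : 0 ≤ tf := ENNReal.toReal_nonneg
    have htg0 : 0 ≤ tg := ENNReal.toReal_nonneg
    have hASMtg : A * Sg ≤ C1norm f * tg :=
      mul_le_mul (by rw [hM]; linarith) hSgtg hSg0 hM0
    rw [abs_le]
    constructor
    · nlinarith [mul_le_mul htf htg htg0 hA0]
    · nlinarith
  · -- p finite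
    have hp0 : p ≠ 0 := (zero_lt_one.trans_le hp).ne'
    set p' := p.toReal with hp'def
    have hp'1 : 1 ≤ p' := by
      rw [← ENNReal.toReal_one]
      exact ENNReal.toReal_mono hpfin hp
    have hp'0 : 0 < p' := lt_of_lt_of_le one_pos hp'1
    set h := fun x : Fin 3 → ℝ => |f x| ^ p' with hhdef
    set k := fun x : Fin 3 → ℝ => |g x| ^ p' with hkdef
    have hh : Continuous h := hf.continuous.abs.rpow_const fun x => Or.inr hp'0.le
    have hk : Continuous k := hg.continuous.abs.rpow_const fun x => Or.inr hp'0.le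
    have hkper : Periodic3 k := fun y kk => congrArg (fun t => |t| ^ p') (hpg y kk)
    have hknn : ∀ x, 0 ≤ k x := fun x => Real.rpow_nonneg (abs_nonneg _) _
    set L := p' * A ^ (p' - 1) * B with hLdef
    have hAp0 : 0 ≤ A ^ (p' - 1) := Real.rpow_nonneg hA0 _
    have hL0 : 0 ≤ L := mul_nonneg (mul_nonneg hp'0.le hAp0) hB0
    have hL : ∀ x y, |h x - h y| ≤ L * ‖x - y‖ := by
      intro x y
      calc |h x - h y| ≤ p' * A ^ (p' - 1) * |(|f x| - |f y|)| :=
            abs_rpow_sub_rpow_le (abs_nonneg _) (abs_nonneg _) (hA x) (hA y) hp'1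
        _ ≤ p' * A ^ (p' - 1) * |f x - f y| :=
            mul_le_mul_of_nonneg_left (abs_abs_sub_abs_le_abs_sub _ _)
              (mul_nonneg hp'0.le hAp0)
        _ ≤ p' * A ^ (p' - 1) * (B * ‖x - y‖) :=
            mul_le_mul_of_nonneg_left (hlip x y) (mul_nonneg hp'0.le hAp0)
        _ = L * ‖x - y‖ := by rw [hLdef]; ring
    have hkey := key hσ h k hh hk hkper hknn L hL0 hL
    set Ig := ∫ x in I01, k x with hIgdef
    set If := ∫ x in I01, h x with hIfdef
    set I1 := ∫ x in I01, h x * k ((σ:ℝ) • x) with hI1def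
    have hmeasI : MeasurableSet I01 := measurableSet_I01
    have hIg0 : 0 ≤ Ig := setIntegral_nonneg hmeasI fun x _ => hknn x
    have hIf0 : 0 ≤ If := setIntegral_nonneg hmeasI fun x _ =>
      Real.rpow_nonneg (abs_nonneg _) _
    have hI10 : 0 ≤ I1 := setIntegral_nonneg hmeasI fun x _ =>
      mul_nonneg (Real.rpow_nonneg (abs_nonneg _) _) (hknn _)
    -- identification of eLpNorms
    have htg : (eLpNorm g p μ3).toReal = Ig ^ p'⁻¹ := by
      rw [eLpNorm_toReal_eq g hg.continuous Sg hSg p hp0 hpfin,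
        setIntegral_cube3_eq_I01]
    have htf : (eLpNorm f p μ3).toReal = If ^ p'⁻¹ := by
      rw [eLpNorm_toReal_eq f hf.continuous A hA p hp0 hpfin,
        setIntegral_cube3_eq_I01]
    have ht1 : (eLpNorm (fun x => f x * g (fun i => (σ : ℝ) * x i)) p μ3).toReal
        = I1 ^ p'⁻¹ := by
      rw [eLpNorm_toReal_eq _ hprodcont (A * Sg) hprodbd p hp0 hpfin,
        setIntegral_cube3_eq_I01]
      have hI : (∫ x in I01, |f x * g (fun i => (σ:ℝ) * x i)| ^ p') = I1 := by
        refine setIntegral_congr_fun measurableSet_I01 fun x _ => ?_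
        simp only [hI1def, hhdef, hkdef]
        rw [abs_mul, Real.mul_rpow (abs_nonneg _) (abs_nonneg _), hsmul x]
      rw [hI]
    rw [ht1, htf, htg]
    have htfg : If ^ p'⁻¹ * Ig ^ p'⁻¹ = (If * Ig) ^ p'⁻¹ :=
      (Real.mul_rpow hIf0 hIg0).symm
    rw [htfg]
    have hstep1 : |I1 ^ p'⁻¹ - (If * Ig) ^ p'⁻¹| ≤ |I1 - If * Ig| ^ p'⁻¹ := by
      have := abs_sub_le_abs_rpow_sub_rpow (a := I1 ^ p'⁻¹) (b := (If * Ig) ^ p'⁻¹)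
        (Real.rpow_nonneg hI10 _) (Real.rpow_nonneg (mul_nonneg hIf0 hIg0) _) hp'1
      rwa [Real.rpow_inv_rpow hI10 hp'0.ne', Real.rpow_inv_rpow (mul_nonneg hIf0 hIg0) hp'0.ne']
        at this
    have hstep2 : |I1 - If * Ig| ^ p'⁻¹ ≤ (2 * L / σ * Ig) ^ p'⁻¹ :=
      Real.rpow_le_rpow (abs_nonneg _) hkey (by positivity)
    have hfactor : (2 * L / σ * Ig) ^ p'⁻¹
        = (2 * p') ^ p'⁻¹ * (A ^ (p' - 1) * B) ^ p'⁻¹ * ((σ:ℝ)⁻¹) ^ p'⁻¹ * Ig ^ p'⁻¹ := by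
      rw [show 2 * L / σ * Ig = (2 * p') * (A ^ (p' - 1) * B) * (σ:ℝ)⁻¹ * Ig by
        rw [hLdef, div_eq_mul_inv]; ring]
      rw [Real.mul_rpow (by positivity) hIg0, Real.mul_rpow (by positivity) (by positivity),
        Real.mul_rpow (by positivity) (mul_nonneg hAp0 hB0)]
    have hb1 : (2 * p') ^ p'⁻¹ ≤ 4 := by
      have hbern : 1 + p' ≤ (2:ℝ) ^ p' := by
        have := one_add_mul_self_le_rpow_one_add (by norm_num : (-1:ℝ) ≤ 1) hp'1
        norm_num at this
        linarith
      have h2 : (2:ℝ) ≤ 2 ^ p' := by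
        calc (2:ℝ) = 2 ^ (1:ℝ) := (Real.rpow_one 2).symm
          _ ≤ 2 ^ p' := Real.rpow_le_rpow_of_exponent_le one_le_two hp'1
      have h4 : (4:ℝ) ^ p' = 2 ^ p' * 2 ^ p' := by
        rw [← Real.mul_rpow (by norm_num) (by norm_num)]; norm_num
      have hle : 2 * p' ≤ (4:ℝ) ^ p' := by
        rw [h4]; nlinarith
      calc (2 * p') ^ p'⁻¹ ≤ ((4:ℝ) ^ p') ^ p'⁻¹ :=
            Real.rpow_le_rpow (by positivity) hle (by positivity)
        _ = 4 := Real.rpow_rpow_inv (by norm_num) hp'0.ne'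
    have hb2 : (A ^ (p' - 1) * B) ^ p'⁻¹ ≤ A + B := by
      rcases eq_or_lt_of_le (by linarith : (0:ℝ) ≤ A + B) with hAB0 | hABpos
      · have hAz : A = 0 := by linarith [hA0, hB0, hAB0.symm]
        have hBz : B = 0 := by linarith [hA0, hB0, hAB0.symm]
        rw [hAz, hBz, mul_zero, Real.zero_rpow (by positivity), add_zero]
      · have hle : A ^ (p' - 1) * B ≤ (A + B) ^ p' := by
          calc A ^ (p' - 1) * B ≤ (A + B) ^ (p' - 1) * (A + B) :=
              mul_le_mul (Real.rpow_le_rpow hA0 (by linarith) (by linarith))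
                (by linarith) hB0 (Real.rpow_nonneg (by linarith) _)
            _ = (A + B) ^ p' := by
                rw [← Real.rpow_add_one hABpos.ne']; ring_nf
        calc (A ^ (p' - 1) * B) ^ p'⁻¹ ≤ ((A + B) ^ p') ^ p'⁻¹ :=
              Real.rpow_le_rpow (mul_nonneg hAp0 hB0) hle (by positivity)
          _ = A + B := Real.rpow_rpow_inv (by linarith) hp'0.ne'
    have hb3 : ((σ:ℝ)⁻¹) ^ p'⁻¹ = (σ:ℝ) ^ (-(1/p).toReal) := by
      rw [one_div, ENNReal.toReal_inv, ← hp'def, Real.inv_rpow hσ0.le,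
        ← Real.rpow_neg hσ0.le]
    have hIgp0 : 0 ≤ Ig ^ p'⁻¹ := Real.rpow_nonneg hIg0 _
    have hσp0 : 0 ≤ ((σ:ℝ)⁻¹) ^ p'⁻¹ := Real.rpow_nonneg (by positivity) _
    calc |I1 ^ p'⁻¹ - (If * Ig) ^ p'⁻¹| ≤ (2 * L / σ * Ig) ^ p'⁻¹ :=
          le_trans hstep1 hstep2
      _ = (2 * p') ^ p'⁻¹ * (A ^ (p' - 1) * B) ^ p'⁻¹ * ((σ:ℝ)⁻¹) ^ p'⁻¹ * Ig ^ p'⁻¹ :=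
          hfactor
      _ ≤ 4 * (A + B) * ((σ:ℝ)⁻¹) ^ p'⁻¹ * Ig ^ p'⁻¹ := by
          apply mul_le_mul_of_nonneg_right _ hIgp0
          apply mul_le_mul_of_nonneg_right _ hσp0
          exact mul_le_mul hb1 hb2 (Real.rpow_nonneg (mul_nonneg hAp0 hB0) _) (by norm_num)
      _ = 4 * (σ:ℝ) ^ (-(1/p).toReal) * C1norm f * Ig ^ p'⁻¹ := by
          rw [hb3, hM]; ring
end
end

section
/- Let u solve the Λ-NSE in the sense that for each Fourier mode ξ with |ξ| > 2Λ(t₀) the nonlinearity vanishes for times ≥ t₀ (because the truncation frequency Λ is decreasing). Then for |ξ| > 2Λ(t₀) and τ ≥ t₀, the Fourier coefficient satisfies û(τ, ξ) = û(t₀, ξ) e^{−ν|ξ|²(τ−t₀)}. Consequently, for any s ≥ 0 and τ ≥ (3/2)t₀, ‖u(τ)‖²_{Ḣˢ} ≤ C(Λ(t₀)^{2s} + t₀^{−s})‖v₀‖²_{L²}. -/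
/-!
A mode with `|ξ| > 2Λ₀` solves the scalar ODE `y' = -ν|ξ|² y` from `t₀` on, hence is the
heat-damped value `e^{-ν|ξ|²(τ-t₀)} û(t₀,ξ)`. For the `Ḣˢ` bound split the frequencies at `2Λ₀`:
low modes carry the weight `|ξ|^{2s} ≤ (2Λ₀)^{2s}`, high modes the weight
`|ξ|^{2s} e^{-2ν|ξ|²(τ-t₀)} ≤ (s / (2ν(τ-t₀)))^s ≤ (s/ν)^s t₀^{-s}` (as `τ - t₀ ≥ t₀/2`), which
is the smoothing effect of the heat semigroup. Parseval on `𝕋³` and the energy bound control the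
remaining `ℓ²` sums of Fourier coefficients at times `τ` and `t₀` by `‖v₀‖²_{L²}`.
-/

open MeasureTheory Filter
open scoped ENNReal BigOperators ComplexConjugate

noncomputable section

/-- The 3-torus `𝕋³ = (ℝ/ℤ)³`. -/
abbrev T3 : Type := Fin 3 → AddCircle (1 : ℝ)

/-- Fourier coefficient of `u : 𝕋³ → ℂ` at frequency `ξ ∈ ℤ³`. -/
noncomputable def fc (u : T3 → ℂ) (ξ : Fin 3 → ℤ) : ℂ :=
  ∫ x : T3, (∏ i, conj (fourier (ξ i) (x i))) * u x

/-- Euclidean norm on `ℝ³`. -/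
def enorm3 (x : Fin 3 → ℝ) : ℝ := Real.sqrt (∑ i, (x i)^2)

/-- Euclidean norm of a frequency `ξ ∈ ℤ³`. -/
def nrmZ (ξ : Fin 3 → ℤ) : ℝ := enorm3 (fun i => (ξ i : ℝ))

open UnitAddTorus

-- Mathlib's Fourier analysis on `UnitAddTorus` uses the Haar probability measure on each factor.
theorem volume_T3_eq : (volume : Measure T3) = Measure.pi fun _ => AddCircle.haarAddCircle := by
  rw [volume_pi, AddCircle.volume_eq_smul_haarAddCircle]; simp

theorem fc_eq_mFourierCoeff (u : T3 → ℂ) (ξ : Fin 3 → ℤ) : fc u ξ = mFourierCoeff u ξ := by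
  change _ = ∫ x, mFourier (-ξ) x • u x ∂(Measure.pi fun _ => AddCircle.haarAddCircle)
  simp [fc, mFourier, ← volume_T3_eq]

theorem hasSum_sq_norm_fc {u : T3 → ℂ} (hu : MemLp u 2 volume) :
    HasSum (fun ξ => ‖fc u ξ‖ ^ 2) ((eLpNorm u 2 volume).toReal ^ 2) := by
  rw [volume_T3_eq] at hu ⊢
  have hcoeff : ∀ ξ, mFourierBasis.repr (hu.toLp u) ξ = fc u ξ := fun ξ => by
    rw [mFourierBasis_repr, fc_eq_mFourierCoeff]
    exact integral_congr_ae (hu.coeFn_toLp.mono fun x hx => by simp only [hx])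
  have h := lp.hasSum_norm (p := 2) (by norm_num) (mFourierBasis.repr (hu.toLp u))
  simp only [hcoeff, LinearIsometryEquiv.norm_map, Lp.norm_toLp, ENNReal.toReal_ofNat,
    Real.rpow_two] at h
  exact h

theorem eq_cexp_mul_of_hasDerivAt_mul_self {f : ℝ → ℂ} {c : ℂ} {t₀ τ : ℝ}
    (hf : ∀ t, t₀ ≤ t → HasDerivAt f (c * f t) t) (hτ : t₀ ≤ τ) :
    f τ = Complex.exp (c * (τ - t₀)) * f t₀ := by
  set g : ℝ → ℂ := fun t => Complex.exp (-c * (t - t₀)) * f t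
  have hg : ∀ t, t₀ ≤ t → HasDerivAt g 0 t := fun t ht => by
    have hlin : HasDerivAt (fun t : ℝ => -c * ((t : ℂ) - t₀)) (-c) t := by
      simpa using ((Complex.ofRealCLM.hasDerivAt (x := t)).sub_const (t₀ : ℂ)).const_mul (-c)
    exact (hlin.cexp.mul (hf t ht)).congr_deriv (by ring)
  have hconst : g τ = g t₀ := constant_of_has_deriv_right_zero
    (fun t ht => (hg t ht.1).continuousAt.continuousWithinAt)
    (fun t ht => (hg t ht.1).hasDerivWithinAt) τ ⟨hτ, le_rfl⟩
  simp only [g, sub_self, mul_zero, Complex.exp_zero, one_mul] at hconst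
  rw [← hconst, ← mul_assoc, ← Complex.exp_add, neg_mul, add_neg_cancel, Complex.exp_zero,
    one_mul]

theorem Real.rpow_le_rpow_mul_exp {p t : ℝ} (hp : 0 ≤ p) (ht : 0 ≤ t) :
    t ^ p ≤ p ^ p * Real.exp t := by
  rcases hp.eq_or_lt with rfl | hp
  · simpa using Real.one_le_exp ht
  calc t ^ p = (t / p) ^ p * p ^ p := by
        rw [Real.div_rpow ht hp.le, div_mul_cancel₀ _ (by positivity)]
    _ ≤ Real.exp (t / p) ^ p * p ^ p := by
        gcongr
        linarith [Real.add_one_le_exp (t / p)]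
    _ = p ^ p * Real.exp t := by rw [← Real.exp_mul, div_mul_cancel₀ _ hp.ne', mul_comm]

theorem Real.rpow_mul_exp_neg_mul_le {p c x : ℝ} (hp : 0 ≤ p) (hc : 0 < c) (hx : 0 ≤ x) :
    x ^ p * Real.exp (-(c * x)) ≤ (p / c) ^ p := by
  have h := Real.rpow_le_rpow_mul_exp hp (by positivity : 0 ≤ c * x)
  rw [Real.mul_rpow hc.le hx] at h
  rw [Real.div_rpow hp hc.le, le_div_iff₀ (by positivity), Real.exp_neg]
  calc x ^ p * (Real.exp (c * x))⁻¹ * c ^ p = c ^ p * x ^ p / Real.exp (c * x) := by ring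
    _ ≤ p ^ p := (div_le_iff₀ (Real.exp_pos _)).2 (by linarith)

theorem rpow_mul_sq_le_of_heat_decay {s κ R n a b : ℝ} (hs : 0 ≤ s) (hκ : 0 < κ) (hR : 0 ≤ R)
    (hn : 0 ≤ n) (hdecay : R < n → a = Real.exp (-(κ * n ^ 2)) * b) :
    n ^ (2 * s) * a ^ 2 ≤ R ^ (2 * s) * a ^ 2 + (s / (2 * κ)) ^ s * b ^ 2 := by
  rcases le_or_gt n R with hnR | hRn
  · calc n ^ (2 * s) * a ^ 2 ≤ R ^ (2 * s) * a ^ 2 := by gcongr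
      _ ≤ _ := le_add_of_nonneg_right (by positivity)
  · calc n ^ (2 * s) * a ^ 2
        = (n ^ 2) ^ s * Real.exp (-(2 * κ * n ^ 2)) * b ^ 2 := by
          rw [hdecay hRn, Real.rpow_mul hn, mul_pow, sq (Real.exp _), ← Real.exp_add]
          norm_cast; ring_nf
      _ ≤ (s / (2 * κ)) ^ s * b ^ 2 := by
          gcongr
          exact Real.rpow_mul_exp_neg_mul_le hs (by positivity) (sq_nonneg n)
      _ ≤ _ := le_add_of_nonneg_left (by positivity)

theorem tsum_rpow_mul_sq_le_of_heat_decay {ι : Type*} {n a b : ι → ℝ} {s κ R : ℝ} (hs : 0 ≤ s)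
    (hκ : 0 < κ) (hR : 0 ≤ R) (hn : ∀ i, 0 ≤ n i) (ha : Summable fun i => a i ^ 2)
    (hb : Summable fun i => b i ^ 2)
    (hdecay : ∀ i, R < n i → a i = Real.exp (-(κ * n i ^ 2)) * b i) :
    ∑' i, n i ^ (2 * s) * a i ^ 2 ≤
      R ^ (2 * s) * ∑' i, a i ^ 2 + (s / (2 * κ)) ^ s * ∑' i, b i ^ 2 := by
  have hle := fun i => rpow_mul_sq_le_of_heat_decay hs hκ hR (hn i) (hdecay i)
  have hsum := (ha.mul_left (R ^ (2 * s))).add (hb.mul_left ((s / (2 * κ)) ^ s))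
  calc ∑' i, n i ^ (2 * s) * a i ^ 2
      ≤ ∑' i, (R ^ (2 * s) * a i ^ 2 + (s / (2 * κ)) ^ s * b i ^ 2) :=
        Summable.tsum_le_tsum hle
          (hsum.of_nonneg_of_le (fun i => by have := hn i; positivity) hle) hsum
    _ = _ := by
        rw [(ha.mul_left _).tsum_add (hb.mul_left _), tsum_mul_left, tsum_mul_left]

/-- If for each mode `|ξ| > 2Λ₀` the Fourier coefficient `û(·,ξ)` solves the pure heat
equation `d/dτ û = −ν|ξ|² û` for `τ ≥ t₀` (the `Λ`-NSE nonlinearity vanishes there),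
and if `‖u(τ)‖_{L²} ≤ ‖v₀‖_{L²}` (energy balance), then
`û(τ,ξ) = e^{−ν|ξ|²(τ−t₀)} û(t₀,ξ)` for `|ξ| > 2Λ₀`, `τ ≥ t₀`, and consequently for
any `s ≥ 0` and `τ ≥ (3/2)t₀`,
`‖u(τ)‖²_{Ḣˢ} ≤ C (Λ₀^{2s} + t₀^{−s}) ‖v₀‖²_{L²}`. -/
theorem high_mode_heat_decay_and_Hs_bound (s ν : ℝ) (hs : 0 ≤ s) (hν : 0 < ν) :
    ∃ C : ℝ, 0 < C ∧
      ∀ (t₀ Λ₀ : ℝ), 0 < t₀ → 0 < Λ₀ →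
      ∀ (u : ℝ → T3 → ℂ) (v₀ : T3 → ℂ),
        MemLp v₀ 2 (volume : Measure T3) →
        (∀ τ : ℝ, MemLp (u τ) 2 (volume : Measure T3)) →
        (∀ τ : ℝ, (eLpNorm (u τ) 2 (volume : Measure T3)).toReal ≤
          (eLpNorm v₀ 2 (volume : Measure T3)).toReal) →
        (∀ ξ : Fin 3 → ℤ, 2 * Λ₀ < nrmZ ξ → ∀ τ : ℝ, t₀ ≤ τ →
          HasDerivAt (fun τ' => fc (u τ') ξ)
            (-(ν * (nrmZ ξ) ^ 2) * fc (u τ) ξ) τ) →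
        (∀ ξ : Fin 3 → ℤ, 2 * Λ₀ < nrmZ ξ → ∀ τ : ℝ, t₀ ≤ τ →
            fc (u τ) ξ =
              Complex.exp (-(ν * (nrmZ ξ) ^ 2 * (τ - t₀))) * fc (u t₀) ξ) ∧
          ∀ τ : ℝ, (3/2) * t₀ ≤ τ →
            (∑' ξ : Fin 3 → ℤ, (nrmZ ξ) ^ (2 * s) * ‖fc (u τ) ξ‖ ^ 2) ≤
              C * (Λ₀ ^ (2 * s) + t₀ ^ (-s)) *
                (eLpNorm v₀ 2 (volume : Measure T3)).toReal ^ 2 := by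
  refine ⟨2 ^ (2 * s) + (s / ν) ^ s, by positivity,
    fun t₀ Λ₀ ht₀ hΛ₀ u v₀ _ hu henergy hder => ?_⟩
  have hheat : ∀ ξ, 2 * Λ₀ < nrmZ ξ → ∀ τ, t₀ ≤ τ →
      fc (u τ) ξ = Complex.exp (-(ν * nrmZ ξ ^ 2 * (τ - t₀))) * fc (u t₀) ξ :=
    fun ξ hξ τ hτ => by rw [← neg_mul]; exact eq_cexp_mul_of_hasDerivAt_mul_self (hder ξ hξ) hτ
  refine ⟨hheat, fun τ hτ => ?_⟩
  have hδ : 0 < τ - t₀ := by linarith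
  set N := (eLpNorm v₀ 2 volume).toReal
  have hL2 : ∀ σ, ∑' ξ, ‖fc (u σ) ξ‖ ^ 2 ≤ N ^ 2 := fun σ => by
    rw [(hasSum_sq_norm_fc (hu σ)).tsum_eq]; gcongr; exact henergy σ
  have hdecay : ∀ ξ, 2 * Λ₀ < nrmZ ξ →
      ‖fc (u τ) ξ‖ = Real.exp (-(ν * (τ - t₀) * nrmZ ξ ^ 2)) * ‖fc (u t₀) ξ‖ := fun ξ hξ => by
    rw [hheat ξ hξ τ (by linarith), norm_mul, ← Complex.norm_exp_ofReal]
    push_cast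
    ring_nf
  have hsmoothing : (s / (2 * (ν * (τ - t₀)))) ^ s ≤ (s / ν) ^ s * t₀ ^ (-s) := by
    rw [Real.rpow_neg ht₀.le, ← div_eq_mul_inv, ← Real.div_rpow (by positivity) ht₀.le, div_div]
    gcongr ?_ ^ _
    exact div_le_div_of_nonneg_left hs (by positivity) (by nlinarith)
  calc ∑' ξ, nrmZ ξ ^ (2 * s) * ‖fc (u τ) ξ‖ ^ 2
      ≤ (2 * Λ₀) ^ (2 * s) * ∑' ξ, ‖fc (u τ) ξ‖ ^ 2 +
          (s / (2 * (ν * (τ - t₀)))) ^ s * ∑' ξ, ‖fc (u t₀) ξ‖ ^ 2 :=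
        tsum_rpow_mul_sq_le_of_heat_decay hs (by positivity) (by positivity)
          (fun ξ => Real.sqrt_nonneg _)
          (hasSum_sq_norm_fc (hu τ)).summable (hasSum_sq_norm_fc (hu t₀)).summable hdecay
    _ ≤ 2 ^ (2 * s) * Λ₀ ^ (2 * s) * N ^ 2 + (s / ν) ^ s * t₀ ^ (-s) * N ^ 2 := by
        rw [Real.mul_rpow zero_le_two hΛ₀.le]
        gcongr
        exacts [hL2 τ, hL2 t₀]
    _ ≤ (2 ^ (2 * s) + (s / ν) ^ s) * (Λ₀ ^ (2 * s) + t₀ ^ (-s)) * N ^ 2 := by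
        linarith
          [show 0 ≤ (2 ^ (2 * s) * t₀ ^ (-s) + (s / ν) ^ s * Λ₀ ^ (2 * s)) * N ^ 2 by positivity]
end
end

section
/- Let u solve the Λ-NSE with Λ(t) ≤ t^{−1/8} on (0,T] and initial datum v₀ ∈ H³(T³), div v₀ = 0, ‖v₀‖_{L²} ≤ M. Suppose the a priori inequality (1/2)(d/dt)‖u(t)‖²_{Ḣ³} + ν‖u(t)‖²_{Ḣ⁴} ≤ C‖P_{<Λ(t)}u(t)‖³_{Ḣ³} holds. Then ‖u‖²_{C([0,T];Ḣ³)} ≤ C ‖v₀‖²_{Ḣ³} exp(C′ M), where C′ depends only on T and on the bound ∫₀^T 8Λ(t)³ dt ≤ C″. -/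
open MeasureTheory Filter intervalIntegral
open scoped ENNReal BigOperators ComplexConjugate

noncomputable section

/-- Squared homogeneous Sobolev norm `‖u‖²_{Ḣˢ} = ∑_ξ |ξ|^{2s} |û(ξ)|²`. -/
noncomputable def HsNormSq (u : T3 → ℂ) (s : ℝ) : ℝ :=
  ∑' ξ : Fin 3 → ℤ, (nrmZ ξ) ^ (2 * s) * ‖fc u ξ‖ ^ 2

/-- Squared homogeneous Sobolev norm of the truncation,
`‖P_{<Λv}u‖²_{Ḣˢ} = ∑_ξ |ξ|^{2s} φ(ξ/Λv)² |û(ξ)|²`. -/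
noncomputable def HsTruncSq (φ : (Fin 3 → ℝ) → ℝ) (Λv : ℝ) (u : T3 → ℂ) (s : ℝ) : ℝ :=
  ∑' ξ : Fin 3 → ℤ,
    (nrmZ ξ) ^ (2 * s) * (φ (fun i => (ξ i : ℝ) / Λv)) ^ 2 * ‖fc u ξ‖ ^ 2


lemma circleOrth (m n : ℤ) :
    ∫ y : AddCircle (1:ℝ), conj ((fourier m) y) * (fourier n) y = if m = n then 1 else 0 := by
  haveI : Fact ((0:ℝ) < 1) := ⟨one_pos⟩
  have hvol : (volume : Measure (AddCircle (1:ℝ))) = @AddCircle.haarAddCircle 1 ⟨one_pos⟩ := by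
    rw [AddCircle.volume_eq_smul_haarAddCircle]; norm_num
  have h := @orthonormal_fourier 1 ⟨one_pos⟩
  rw [orthonormal_iff_ite] at h
  have h2 := h m n
  rw [ContinuousMap.inner_toLp] at h2
  rw [hvol]
  simpa only [mul_comm] using h2


def e3 (ξ : Fin 3 → ℤ) : T3 → ℂ := fun x => ∏ i, fourier (ξ i) (x i)

lemma e3_cont (ξ : Fin 3 → ℤ) : Continuous (e3 ξ) := by
  apply continuous_finset_prod
  exact fun i _ => (fourier (ξ i)).continuous.comp (continuous_apply i)

lemma e3_mem (ξ : Fin 3 → ℤ) : MemLp (e3 ξ) 2 (volume : Measure T3) := by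
  exact (e3_cont ξ).memLp_of_hasCompactSupport (HasCompactSupport.of_compactSpace _)

def E3 (ξ : Fin 3 → ℤ) : Lp ℂ 2 (volume : Measure T3) := ((e3_mem ξ).toLp (e3 ξ))

lemma E3_orthonormal : Orthonormal ℂ E3 := by
  rw [orthonormal_iff_ite]
  intro ξ η
  rw [MeasureTheory.L2.inner_def]
  have h1 : ∀ᵐ x ∂(volume : Measure T3),
      (inner ℂ ((E3 ξ) x) ((E3 η) x) : ℂ) = conj (e3 ξ x) * e3 η x := by
    filter_upwards [(e3_mem ξ).coeFn_toLp, (e3_mem η).coeFn_toLp] with x h h'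
    rw [RCLike.inner_apply, mul_comm]; simp only [E3]; rw [h, h']
  rw [MeasureTheory.integral_congr_ae h1]
  have h2 : ∀ x : T3, conj (e3 ξ x) * e3 η x
      = ∏ i, (conj ((fourier (ξ i)) (x i)) * (fourier (η i)) (x i)) := by
    intro x
    simp [e3, map_prod, Finset.prod_mul_distrib]
  simp_rw [h2]
  rw [MeasureTheory.volume_pi, MeasureTheory.integral_fintype_prod_eq_prod
    (f := fun i y => conj ((fourier (ξ i)) y) * (fourier (η i)) y)]
  simp_rw [circleOrth]
  by_cases h : ξ = η
  · simp [h]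
  · obtain ⟨i, hi⟩ := Function.ne_iff.mp h
    rw [if_neg h]
    exact Finset.prod_eq_zero (Finset.mem_univ i) (by simp [hi])


lemma fc_eq_inner (u : T3 → ℂ) (hu : MemLp u 2 (volume : Measure T3)) (ξ : Fin 3 → ℤ) :
    fc u ξ = inner ℂ (E3 ξ) (hu.toLp u) := by
  rw [MeasureTheory.L2.inner_def]
  refine (MeasureTheory.integral_congr_ae ?_).symm
  filter_upwards [(e3_mem ξ).coeFn_toLp, hu.coeFn_toLp] with x h h'
  rw [RCLike.inner_apply, mul_comm]; simp only [E3]; rw [h, h']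
  simp [e3, map_prod]

lemma besselT3 (u : T3 → ℂ) (hu : MemLp u 2 (volume : Measure T3)) :
    Summable (fun ξ => ‖fc u ξ‖ ^ 2) ∧
      ∑' ξ : Fin 3 → ℤ, ‖fc u ξ‖ ^ 2 ≤ ((eLpNorm u 2 (volume : Measure T3)).toReal) ^ 2 := by
  have h1 : ∀ ξ, fc u ξ = inner ℂ (E3 ξ) (hu.toLp u) := fc_eq_inner u hu
  constructor
  · simp_rw [h1]
    exact E3_orthonormal.inner_products_summable _
  · calc ∑' ξ : Fin 3 → ℤ, ‖fc u ξ‖ ^ 2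
        = ∑' ξ : Fin 3 → ℤ, ‖(inner ℂ (E3 ξ) (hu.toLp u) : ℂ)‖ ^ 2 := by simp_rw [h1]
      _ ≤ ‖hu.toLp u‖ ^ 2 := E3_orthonormal.tsum_inner_products_le _
      _ = ((eLpNorm u 2 (volume : Measure T3)).toReal) ^ 2 := by
          rw [MeasureTheory.Lp.norm_toLp]


lemma nrmZ_nonneg (ξ : Fin 3 → ℤ) : 0 ≤ nrmZ ξ := Real.sqrt_nonneg _

lemma enorm3_div {Λv : ℝ} (hΛ : 0 < Λv) (x : Fin 3 → ℝ) :
    enorm3 (fun i => x i / Λv) = enorm3 x / Λv := by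
  unfold enorm3
  rw [eq_div_iff hΛ.ne', ← Real.sqrt_sq hΛ.le, ← Real.sqrt_mul (by positivity)]
  congr 1
  rw [Finset.sum_mul]
  congr 1; ext i
  field_simp
  rw [Real.sq_sqrt (by positivity)]

lemma HsNormSq_term_nonneg (u : T3 → ℂ) (s : ℝ) (ξ : Fin 3 → ℤ) :
    0 ≤ (nrmZ ξ) ^ (2 * s) * ‖fc u ξ‖ ^ 2 :=
  mul_nonneg (Real.rpow_nonneg (nrmZ_nonneg ξ) _) (sq_nonneg _)

lemma HsNormSq_nonneg (u : T3 → ℂ) (s : ℝ) : 0 ≤ HsNormSq u s :=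
  tsum_nonneg (HsNormSq_term_nonneg u s)

lemma HsTruncSq_term_nonneg (φ : (Fin 3 → ℝ) → ℝ) (Λv : ℝ) (u : T3 → ℂ) (s : ℝ) (ξ : Fin 3 → ℤ) :
    0 ≤ (nrmZ ξ) ^ (2 * s) * (φ (fun i => (ξ i : ℝ) / Λv)) ^ 2 * ‖fc u ξ‖ ^ 2 :=
  mul_nonneg (mul_nonneg (Real.rpow_nonneg (nrmZ_nonneg ξ) _) (sq_nonneg _)) (sq_nonneg _)

lemma HsTruncSq_nonneg (φ : (Fin 3 → ℝ) → ℝ) (Λv : ℝ) (u : T3 → ℂ) (s : ℝ) :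
    0 ≤ HsTruncSq φ Λv u s :=
  tsum_nonneg (HsTruncSq_term_nonneg φ Λv u s)

lemma term_bound (φ : (Fin 3 → ℝ) → ℝ) (hφ01 : ∀ x, φ x ∈ Set.Icc (0:ℝ) 1)
    (hφ0 : ∀ x, 2 ≤ enorm3 x → φ x = 0)
    {Λv : ℝ} (hΛ : 0 < Λv) (u : T3 → ℂ) (ξ : Fin 3 → ℤ) :
    (nrmZ ξ) ^ (2 * (3:ℝ)) * (φ (fun i => (ξ i : ℝ) / Λv)) ^ 2 * ‖fc u ξ‖ ^ 2
      ≤ (2*Λv)^6 * ‖fc u ξ‖ ^ 2 := by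
  set p := φ (fun i => (ξ i : ℝ) / Λv) with hp
  by_cases hzero : p = 0
  · rw [hzero]
    have : (0:ℝ) ≤ (2*Λv)^6 * ‖fc u ξ‖ ^ 2 := by positivity
    simpa using this
  · have hlt : nrmZ ξ < 2 * Λv := by
      by_contra hge
      push_neg at hge
      apply hzero
      rw [hp]
      apply hφ0
      rw [enorm3_div hΛ]
      rw [le_div_iff₀ hΛ]
      exact le_trans (by linarith) hge
    have hA : (nrmZ ξ) ^ (2 * (3:ℝ)) ≤ (2*Λv)^6 := by
      have h6 : (nrmZ ξ) ^ (2 * (3:ℝ)) = (nrmZ ξ)^(6:ℕ) := by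
        rw [show (2 * (3:ℝ)) = ((6:ℕ):ℝ) by norm_num, Real.rpow_natCast]
      rw [h6]
      exact pow_le_pow_left₀ (nrmZ_nonneg ξ) hlt.le 6
    have hp2 : p^2 ≤ 1 := by
      have h1 := (hφ01 (fun i => (ξ i : ℝ) / Λv)).1
      have h2 := (hφ01 (fun i => (ξ i : ℝ) / Λv)).2
      rw [← hp] at h1 h2
      nlinarith
    have hA0 : (0:ℝ) ≤ (nrmZ ξ) ^ (2 * (3:ℝ)) := Real.rpow_nonneg (nrmZ_nonneg ξ) _
    have hF : (0:ℝ) ≤ ‖fc u ξ‖ ^ 2 := sq_nonneg _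
    calc (nrmZ ξ) ^ (2 * (3:ℝ)) * p ^ 2 * ‖fc u ξ‖ ^ 2
        = ((nrmZ ξ) ^ (2 * (3:ℝ)) * ‖fc u ξ‖ ^ 2) * p ^ 2 := by ring
      _ ≤ ((nrmZ ξ) ^ (2 * (3:ℝ)) * ‖fc u ξ‖ ^ 2) * 1 :=
          mul_le_mul_of_nonneg_left hp2 (mul_nonneg hA0 hF)
      _ = (nrmZ ξ) ^ (2 * (3:ℝ)) * ‖fc u ξ‖ ^ 2 := mul_one _
      _ ≤ (2*Λv)^6 * ‖fc u ξ‖ ^ 2 := mul_le_mul_of_nonneg_right hA hF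

lemma trunc_summable (φ : (Fin 3 → ℝ) → ℝ) (hφ01 : ∀ x, φ x ∈ Set.Icc (0:ℝ) 1)
    (hφ0 : ∀ x, 2 ≤ enorm3 x → φ x = 0)
    {Λv : ℝ} (hΛ : 0 < Λv) (u : T3 → ℂ) (hu : MemLp u 2 (volume : Measure T3)) :
    Summable (fun ξ : Fin 3 → ℤ =>
      (nrmZ ξ) ^ (2 * (3:ℝ)) * (φ (fun i => (ξ i : ℝ) / Λv)) ^ 2 * ‖fc u ξ‖ ^ 2) := by
  apply Summable.of_nonneg_of_le (HsTruncSq_term_nonneg φ Λv u 3)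
    (fun ξ => term_bound φ hφ01 hφ0 hΛ u ξ)
  exact (besselT3 u hu).1.mul_left _

lemma keyEstimate (φ : (Fin 3 → ℝ) → ℝ) (hφ01 : ∀ x, φ x ∈ Set.Icc (0:ℝ) 1)
    (hφ0 : ∀ x, 2 ≤ enorm3 x → φ x = 0)
    {Λv : ℝ} (hΛ : 0 < Λv) (u : T3 → ℂ) (hu : MemLp u 2 (volume : Measure T3)) {M : ℝ}
    (hM : (eLpNorm u 2 (volume : Measure T3)).toReal ≤ M)
    (hsum : Summable (fun ξ : Fin 3 → ℤ => (nrmZ ξ)^(2*(3:ℝ)) * ‖fc u ξ‖^2)) :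
    (HsTruncSq φ Λv u 3) ^ ((3:ℝ)/2) ≤ (2*Λv)^3 * M * HsNormSq u 3 := by
  have hM0 : 0 ≤ M := le_trans ENNReal.toReal_nonneg hM
  set Q := HsTruncSq φ Λv u 3 with hQdef
  have hQ0 : 0 ≤ Q := HsTruncSq_nonneg _ _ _ _
  have hQsum := trunc_summable φ hφ01 hφ0 hΛ u hu
  -- Q ≤ (2Λ)^6 M²
  have hQle : Q ≤ (2*Λv)^6 * M^2 := by
    have h1 : Q ≤ ∑' ξ : Fin 3 → ℤ, (2*Λv)^6 * ‖fc u ξ‖ ^ 2 := by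
      apply Summable.tsum_le_tsum (fun ξ => term_bound φ hφ01 hφ0 hΛ u ξ) hQsum
      exact (besselT3 u hu).1.mul_left _
    rw [tsum_mul_left] at h1
    refine h1.trans ?_
    have h2 : ∑' ξ : Fin 3 → ℤ, ‖fc u ξ‖ ^ 2 ≤ M^2 := by
      refine (besselT3 u hu).2.trans ?_
      exact pow_le_pow_left₀ ENNReal.toReal_nonneg hM 2
    exact mul_le_mul_of_nonneg_left h2 (by positivity)
  -- Q ≤ HsNormSq u 3
  have hQleY : Q ≤ HsNormSq u 3 := by
    apply Summable.tsum_le_tsum _ hQsum hsum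
    intro ξ
    have h1 := (hφ01 (fun i => (ξ i : ℝ) / Λv)).1
    have h2 := (hφ01 (fun i => (ξ i : ℝ) / Λv)).2
    have hA0 : (0:ℝ) ≤ (nrmZ ξ) ^ (2 * (3:ℝ)) := Real.rpow_nonneg (nrmZ_nonneg ξ) _
    have hF : (0:ℝ) ≤ ‖fc u ξ‖ ^ 2 := sq_nonneg _
    have hp2 : (φ (fun i => (ξ i : ℝ) / Λv)) ^ 2 ≤ 1 := by nlinarith
    calc (nrmZ ξ) ^ (2 * (3:ℝ)) * (φ (fun i => (ξ i : ℝ) / Λv)) ^ 2 * ‖fc u ξ‖ ^ 2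
        = ((nrmZ ξ) ^ (2 * (3:ℝ)) * ‖fc u ξ‖ ^ 2) * (φ (fun i => (ξ i : ℝ) / Λv)) ^ 2 := by ring
      _ ≤ ((nrmZ ξ) ^ (2 * (3:ℝ)) * ‖fc u ξ‖ ^ 2) * 1 :=
          mul_le_mul_of_nonneg_left hp2 (mul_nonneg hA0 hF)
      _ = (nrmZ ξ) ^ (2 * (3:ℝ)) * ‖fc u ξ‖ ^ 2 := mul_one _
  -- sqrt bound
  have hsqrt : Q ^ ((1:ℝ)/2) ≤ (2*Λv)^3 * M := by
    have h1 : Q ^ ((1:ℝ)/2) ≤ ((2*Λv)^6 * M^2) ^ ((1:ℝ)/2) :=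
      Real.rpow_le_rpow hQ0 hQle (by norm_num)
    refine h1.trans_eq ?_
    have h2 : (2*Λv)^6 * M^2 = ((2*Λv)^3 * M)^2 := by ring
    rw [h2, ← Real.sqrt_eq_rpow, Real.sqrt_sq (by positivity)]
  calc Q ^ ((3:ℝ)/2) = Q ^ ((1:ℝ)/2) * Q := by
        rcases eq_or_lt_of_le hQ0 with h | h
        · rw [← h]
          rw [Real.zero_rpow (by norm_num), Real.zero_rpow (by norm_num), mul_zero]
        · rw [show (3:ℝ)/2 = 1/2 + 1 by norm_num, Real.rpow_add h, Real.rpow_one]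
    _ ≤ ((2*Λv)^3 * M) * HsNormSq u 3 := by
        apply mul_le_mul hsqrt hQleY hQ0
        positivity

/-- For `H³` initial data `v₀` with `‖v₀‖_{L²} ≤ M` and `Λ(t) ≤ t^{-1/8}`, if the a
priori inequality `(1/2) d/dt ‖u‖²_{Ḣ³} + ν ‖u‖²_{Ḣ⁴} ≤ Ca ‖P_{<Λ(t)}u‖³_{Ḣ³}` holds,
and `∫₀ᵀ 8Λ(t)³ dt ≤ C''`, then
`‖u‖²_{C([0,T];Ḣ³)} ≤ C ‖v₀‖²_{Ḣ³} exp(C' M)`, with `C, C'` depending only on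
`T, ν, Ca, C''`. -/
theorem H3_a_priori_bound (T ν Ca C'' : ℝ) (hT : 0 < T) (hν : 0 < ν)
    (hCa : 0 ≤ Ca) (hC'' : 0 ≤ C'') :
    ∃ C C' : ℝ, 0 < C ∧ 0 < C' ∧
      ∀ (φ : (Fin 3 → ℝ) → ℝ), ContDiff ℝ (⊤ : ℕ∞) φ →
        (∀ x, φ x ∈ Set.Icc (0:ℝ) 1) →
        (∀ x y, enorm3 x = enorm3 y → φ x = φ y) →
        (∀ x, enorm3 x < 1 → φ x = 1) →
        (∀ x, 2 ≤ enorm3 x → φ x = 0) →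
      ∀ (Λ : ℝ → ℝ), (∀ t ∈ Set.Ioc (0:ℝ) T, 0 < Λ t ∧ Λ t ≤ t ^ (-(1/8 : ℝ))) →
        IntervalIntegrable (fun t => 8 * (Λ t) ^ 3) volume 0 T →
        (∫ t in (0:ℝ)..T, 8 * (Λ t) ^ 3) ≤ C'' →
      ∀ (u : ℝ → T3 → ℂ) (v₀ : T3 → ℂ) (M : ℝ) (yd : ℝ → ℝ),
        u 0 = v₀ →
        (eLpNorm v₀ 2 (volume : Measure T3)).toReal ≤ M →
        (∀ t ∈ Set.Icc (0:ℝ) T, MemLp (u t) 2 (volume : Measure T3) ∧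
          (eLpNorm (u t) 2 (volume : Measure T3)).toReal ≤ M) →
        (∀ t ∈ Set.Icc (0:ℝ) T,
          HasDerivAt (fun τ => HsNormSq (u τ) 3) (yd t) t ∧
            (1/2) * yd t + ν * HsNormSq (u t) 4 ≤
              Ca * (HsTruncSq φ (Λ t) (u t) 3) ^ ((3:ℝ)/2)) →
        ∀ t ∈ Set.Icc (0:ℝ) T,
          HsNormSq (u t) 3 ≤ C * HsNormSq v₀ 3 * Real.exp (C' * M) := by
  have ha0 : (0:ℝ) < (8/5) * T ^ ((5:ℝ)/8) := by positivity
  set a := (8/5) * T ^ ((5:ℝ)/8) with hadef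
  have hCa' : (0:ℝ) ≤ 16 * Ca * a := by positivity
  refine ⟨Real.exp a, 16 * Ca * a + 1, Real.exp_pos a, by linarith, ?_⟩
  intro φ hφs hφ01 hφrad hφ1 hφ0 Λ hΛ hΛint hΛC u v₀ M yd hu0 hv0M huM hyd t ht
  have hM0 : (0:ℝ) ≤ M := le_trans ENNReal.toReal_nonneg hv0M
  set y : ℝ → ℝ := fun τ => HsNormSq (u τ) 3 with hydef
  set r : ℝ := 16 * Ca * M + 1 with hrdef
  have hr1 : (1:ℝ) ≤ r := by nlinarith
  have hy0 : y 0 = HsNormSq v₀ 3 := by rw [hydef]; simp [hu0]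
  have hy0nn : 0 ≤ y 0 := HsNormSq_nonneg _ _
  -- main claim
  have main : y t ≤ y 0 * Real.exp (r * a) := by
    rcases eq_or_lt_of_le ht.1 with h0 | ht0
    · rw [← h0]
      have h1 : (1:ℝ) ≤ Real.exp (r * a) := Real.one_le_exp (by nlinarith)
      nlinarith
    · -- t > 0
      set K := Real.exp (r * a) with hKdef
      have hK0 : 0 < K := Real.exp_pos _
      have step1 : ∀ δ ∈ Set.Ioc (0:ℝ) t, y t ≤ y δ * K := by
        intro δ hδ
        have hδ0 : 0 < δ := hδ.1
        have hδt : δ ≤ t := hδ.2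
        have hsub : Set.Icc δ t ⊆ Set.Icc (0:ℝ) T := fun x hx =>
          ⟨le_trans hδ0.le hx.1, le_trans hx.2 ht.2⟩
        have step1' : ∀ ε > (0:ℝ), y t ≤ (y δ + ε) * K := by
          intro ε hε
          have hyδnn : 0 ≤ y δ := HsNormSq_nonneg _ _
          set B : ℝ → ℝ := fun x =>
            (y δ + ε) * Real.exp (r * (8/5) * (x ^ ((5:ℝ)/8) - δ ^ ((5:ℝ)/8))) with hBdef
          set B' : ℝ → ℝ := fun x => r * x ^ (-(3:ℝ)/8) * B x with hB'def
          have hBpos : ∀ x, 0 < B x := fun x =>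
            mul_pos (by linarith) (Real.exp_pos _)
          have hyt : y t ≤ B t := by
            refine image_le_of_deriv_right_lt_deriv_boundary'
              (f := y) (f' := yd) (a := δ) (b := t) (B := B) (B' := B')
              ?_ ?_ ?_ ?_ ?_ ?_ (Set.right_mem_Icc.2 hδt)
            · intro x hx
              exact ((hyd x (hsub hx)).1).continuousAt.continuousWithinAt
            · intro x hx
              exact ((hyd x (hsub (Set.Ico_subset_Icc_self hx))).1).hasDerivWithinAt
            · have : B δ = y δ + ε := by simp [hBdef]
              rw [this]; linarith
            · apply ContinuousOn.mul continuousOn_const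
              apply Real.continuous_exp.comp_continuousOn
              apply ContinuousOn.mul continuousOn_const
              apply ContinuousOn.sub _ continuousOn_const
              intro x hx
              exact (Real.continuousAt_rpow_const x _ (Or.inr (by norm_num))).continuousWithinAt
            · intro x hx
              have hx0 : 0 < x := lt_of_lt_of_le hδ0 hx.1
              have h1 : HasDerivAt (fun z : ℝ => z ^ ((5:ℝ)/8))
                  ((5/8) * x ^ ((5:ℝ)/8 - 1)) x :=
                Real.hasDerivAt_rpow_const (Or.inl hx0.ne')
              have h2 := ((h1.sub_const (δ ^ ((5:ℝ)/8))).const_mul (r * (8/5))).exp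
              have h3 := h2.const_mul (y δ + ε)
              have heq : (y δ + ε) *
                  (Real.exp (r * (8/5) * (x ^ ((5:ℝ)/8) - δ ^ ((5:ℝ)/8))) *
                    (r * (8/5) * ((5/8) * x ^ ((5:ℝ)/8 - 1)))) = B' x := by
                rw [hB'def, hBdef]
                have : (5:ℝ)/8 - 1 = -(3:ℝ)/8 := by norm_num
                rw [this]; ring
              rw [heq] at h3
              exact h3.hasDerivWithinAt
            · -- contact bound
              intro x hx hcontact
              have hx0 : 0 < x := lt_of_lt_of_le hδ0 hx.1
              have hxIcc : x ∈ Set.Icc (0:ℝ) T := hsub (Set.Ico_subset_Icc_self hx)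
              have hxT : x ≤ T := hxIcc.2
              obtain ⟨hD, hIneq⟩ := hyd x hxIcc
              have hH4 : 0 ≤ HsNormSq (u x) 4 := HsNormSq_nonneg _ _
              have hyd2 : yd x ≤ 2 * (Ca * (HsTruncSq φ (Λ x) (u x) 3) ^ ((3:ℝ)/2)) := by
                nlinarith [mul_nonneg hν.le hH4]
              obtain ⟨hΛx, hΛle⟩ := hΛ x ⟨hx0, hxT⟩
              have hBx : 0 < B x := hBpos x
              have hyx : y x = B x := hcontact
              have hysum : Summable
                  (fun ξ : Fin 3 → ℤ => (nrmZ ξ) ^ (2 * (3:ℝ)) * ‖fc (u x) ξ‖ ^ 2) := by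
                by_contra hns
                have : y x = 0 := tsum_eq_zero_of_not_summable hns
                rw [hyx] at this
                linarith
              have hkey := keyEstimate φ hφ01 hφ0 hΛx (u x) (huM x hxIcc).1
                (huM x hxIcc).2 hysum
              have hyxnn : 0 ≤ y x := HsNormSq_nonneg _ _
              have hcube : (2 * Λ x) ^ 3 ≤ 8 * x ^ (-(3:ℝ)/8) := by
                have h1 : (Λ x) ^ 3 ≤ (x ^ (-(1/8):ℝ)) ^ 3 :=
                  pow_le_pow_left₀ hΛx.le hΛle 3
                have h2 : (x ^ (-(1/8):ℝ)) ^ (3:ℕ) = x ^ (-(3:ℝ)/8) := by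
                  rw [← Real.rpow_natCast (x ^ (-(1/8):ℝ)) 3, ← Real.rpow_mul hx0.le]
                  norm_num
                calc (2 * Λ x) ^ 3 = 8 * (Λ x) ^ 3 := by ring
                  _ ≤ 8 * (x ^ (-(1/8):ℝ)) ^ 3 := by linarith
                  _ = 8 * x ^ (-(3:ℝ)/8) := by rw [h2]
              have hxr : 0 < x ^ (-(3:ℝ)/8) := Real.rpow_pos_of_pos hx0 _
              have hchain : yd x ≤ 16 * Ca * M * x ^ (-(3:ℝ)/8) * y x := by
                have h1 : (HsTruncSq φ (Λ x) (u x) 3) ^ ((3:ℝ)/2)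
                    ≤ (8 * x ^ (-(3:ℝ)/8)) * M * y x := by
                  refine hkey.trans ?_
                  apply mul_le_mul_of_nonneg_right _ hyxnn
                  exact mul_le_mul_of_nonneg_right hcube hM0
                calc yd x ≤ 2 * (Ca * (HsTruncSq φ (Λ x) (u x) 3) ^ ((3:ℝ)/2)) := hyd2
                  _ ≤ 2 * (Ca * ((8 * x ^ (-(3:ℝ)/8)) * M * y x)) := by
                      apply mul_le_mul_of_nonneg_left _ (by norm_num)
                      exact mul_le_mul_of_nonneg_left h1 hCa
                  _ = 16 * Ca * M * x ^ (-(3:ℝ)/8) * y x := by ring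
              have hBx' : B' x = r * x ^ (-(3:ℝ)/8) * B x := rfl
              rw [hBx']
              have hlt : 16 * Ca * M * (x ^ (-(3:ℝ)/8) * B x)
                  < r * (x ^ (-(3:ℝ)/8) * B x) := by
                apply mul_lt_mul_of_pos_right _ (mul_pos hxr hBx)
                rw [hrdef]; linarith
              rw [hyx] at hchain
              calc yd x ≤ 16 * Ca * M * x ^ (-(3:ℝ)/8) * B x := hchain
                _ = 16 * Ca * M * (x ^ (-(3:ℝ)/8) * B x) := by ring
                _ < r * (x ^ (-(3:ℝ)/8) * B x) := hlt
                _ = r * x ^ (-(3:ℝ)/8) * B x := by ring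
          -- B t ≤ (y δ + ε) * K
          refine hyt.trans ?_
          have hexp : r * (8/5) * (t ^ ((5:ℝ)/8) - δ ^ ((5:ℝ)/8)) ≤ r * a := by
            have h1 : t ^ ((5:ℝ)/8) ≤ T ^ ((5:ℝ)/8) :=
              Real.rpow_le_rpow ht0.le ht.2 (by norm_num)
            have h2 : 0 ≤ δ ^ ((5:ℝ)/8) := Real.rpow_nonneg hδ0.le _
            rw [hadef]
            nlinarith
          exact mul_le_mul_of_nonneg_left (Real.exp_le_exp.2 hexp) (by linarith)
        -- ε → 0
        refine le_of_forall_pos_le_add ?_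
        intro ε' hε'
        have h1 := step1' (ε' / K) (by positivity)
        calc y t ≤ (y δ + ε' / K) * K := h1
          _ = y δ * K + ε' := by field_simp
      -- δ → 0
      have hcont0 : ContinuousAt y 0 := ((hyd 0 ⟨le_rfl, hT.le⟩).1).continuousAt
      have htend : Tendsto (fun δ => y δ * K) (nhdsWithin 0 (Set.Ioi 0)) (nhds (y 0 * K)) :=
        ((hcont0.tendsto.mono_left nhdsWithin_le_nhds).mul tendsto_const_nhds)
      refine ge_of_tendsto htend ?_
      filter_upwards [Ioc_mem_nhdsGT_of_mem (Set.mem_Ico.2 ⟨le_rfl, ht0⟩)] with δ hδ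
      exact step1 δ hδ
  -- conclude
  have hexp2 : Real.exp (r * a) ≤ Real.exp a * Real.exp ((16 * Ca * a + 1) * M) := by
    rw [← Real.exp_add]
    apply Real.exp_le_exp.2
    rw [hrdef]
    nlinarith
  calc HsNormSq (u t) 3 = y t := rfl
    _ ≤ y 0 * Real.exp (r * a) := main
    _ ≤ y 0 * (Real.exp a * Real.exp ((16 * Ca * a + 1) * M)) :=
        mul_le_mul_of_nonneg_left hexp2 hy0nn
    _ = Real.exp a * HsNormSq v₀ 3 * Real.exp ((16 * Ca * a + 1) * M) := by
        rw [hy0]; ring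
end
end
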